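/- If I₁ is Pareto preferred over I₂ with respect to a set R of preference rules, then I₁ is also Maximal preferred over I₂ with respect to R; i.e., the Maximal preference relation subsumes the Pareto preference relation. -/
import Mathlib

open scoped Classical

/-- Pareto preference implies Maximal preference: if there is a rule `r ∈ R` with
`I₁ ≻_r I₂` and `I₁ ≽_{r'} I₂` for all `r' ∈ R`, then
`|{r ∈ R : I₁ ≽_r I₂}| > |{r ∈ R : I₂ ≽_r I₁}|`. -/
theorem pareto_implies_maximal {α ρ : Type*} (R : Finset ρ)
    (succ : ρ → α → α → Prop) (eqr : ρ → α → α → Prop)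
    (heq : ∀ r ∈ R, Equivalence (eqr r))
    (htri : ∀ r ∈ R, ∀ I₁ I₂ : α,
      (succ r I₁ I₂ ∧ ¬ succ r I₂ I₁ ∧ ¬ eqr r I₁ I₂) ∨
      (¬ succ r I₁ I₂ ∧ succ r I₂ I₁ ∧ ¬ eqr r I₁ I₂) ∨
      (¬ succ r I₁ I₂ ∧ ¬ succ r I₂ I₁ ∧ eqr r I₁ I₂))
    (I₁ I₂ : α)
    (hpareto : ∃ r ∈ R, succ r I₁ I₂ ∧
        ∀ r' ∈ R, succ r' I₁ I₂ ∨ eqr r' I₁ I₂) :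
    (R.filter fun r => succ r I₁ I₂ ∨ eqr r I₁ I₂).card >
      (R.filter fun r => succ r I₂ I₁ ∨ eqr r I₂ I₁).card := by
  obtain ⟨r₀, hr₀R, hsucc, hall⟩ := hpareto
  have h1 : (R.filter fun r => succ r I₁ I₂ ∨ eqr r I₁ I₂) = R := by
    apply Finset.filter_true_of_mem
    exact hall
  have h2 : (R.filter fun r => succ r I₂ I₁ ∨ eqr r I₂ I₁) ⊆ R.erase r₀ := by
    intro r hr
    rw [Finset.mem_filter] at hr
    obtain ⟨hrR, hcases⟩ := hr
    rw [Finset.mem_erase]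
    refine ⟨?_, hrR⟩
    rintro rfl
    rcases htri r hrR I₁ I₂ with ⟨_, hn, hne⟩ | ⟨hn, _, _⟩ | ⟨hn, _, _⟩
    · rcases hcases with h | h
      · exact hn h
      · exact hne ((heq r hrR).symm h)
    · exact hn hsucc
    · exact hn hsucc
  calc (R.filter fun r => succ r I₂ I₁ ∨ eqr r I₂ I₁).card
      ≤ (R.erase r₀).card := Finset.card_le_card h2
    _ < R.card := Finset.card_erase_lt_of_mem hr₀R
    _ = _ := by rw [h1]
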